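/- arXiv:1606.01137 — 2 statements merged into one kernel-verified Lean document; each statement's English description precedes it below -/
import Mathlib

section
/- The function G(c) = ∫₀^∞ (√u − 1/√u) exp(−c(u³/6 − u/2)) du is strictly decreasing on (0,∞); in fact its derivative G'(c) = ∫₀^∞ (√u − 1/√u)(−u³/6 + u/2) exp(c(−u³/6 + u/2)) du is strictly negative for every c > 0. -/
/-!
Write `G c = ∫₀^∞ amp u * exp (c * phase u) du`, where `amp u = √u - 1/√u` and
`phase u = -u³/6 + u/2` are the paper's `h₁` and `h₂`. Since `phase u ≤ 1 - u³/12`, for `c` in a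
compact subinterval of `(0, ∞)` both the integrand and its `c`-derivative
`amp * phase * exp (c * phase)` are dominated by a multiple of `(1 + u⁴) u^(-1/2) exp (-a u³)`,
so `G` may be differentiated under the integral sign.

The derivative integrand is `≤ 0` on `(0, 1]` (where `amp ≤ 0 ≤ phase`) and on `[√3, ∞)` (where
`phase ≤ 0 ≤ amp`). On `[2 - √3, √3]` pair `u = 1 - δ` with `u = 1 + δ`: as
`|amp (1 - δ)| > amp (1 + δ)` and `phase (1 - δ) > phase (1 + δ) ≥ 0`, the negative value at
`1 - δ` outweighs the value at `1 + δ`.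
-/

open Real MeasureTheory Set Filter Topology

lemma integrableOn_one_add_pow_div_sqrt_mul_exp (n : ℕ) {p : ℕ} (hp : 0 < p) {b : ℝ}
    (hb : 0 < b) :
    IntegrableOn (fun u => (1 + u ^ n) / √u * exp (-b * u ^ p)) (Ioi 0) := by
  have hrpow {s : ℝ} (hs : -1 < s) :
      IntegrableOn (fun u : ℝ => u ^ s * exp (-b * u ^ p)) (Ioi 0) := by
    simpa only [rpow_natCast] using
      integrableOn_rpow_mul_exp_neg_mul_rpow hs (Nat.cast_pos.2 hp) hb
  refine ((hrpow (s := -1 / 2) (by norm_num)).add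
    (hrpow (s := n - 1 / 2) (by linarith [n.cast_nonneg (α := ℝ)]))).congr_fun
    (fun u (hu : 0 < u) => ?_) measurableSet_Ioi
  rw [Pi.add_apply, ← add_mul, rpow_sub hu, rpow_natCast, neg_div, rpow_neg hu.le,
    ← sqrt_eq_rpow]
  field_simp

lemma integral_Ioi_le_intervalIntegral {f : ℝ → ℝ} {x₀ a b : ℝ} (ha : x₀ ≤ a) (hab : a ≤ b)
    (hf : IntegrableOn f (Ioi x₀)) (h_left : ∀ u ∈ Ioc x₀ a, f u ≤ 0)
    (h_right : ∀ u ∈ Ioi b, f u ≤ 0) :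
    ∫ u in Ioi x₀, f u ≤ ∫ u in a..b, f u := by
  rw [intervalIntegral.integral_of_le hab, ← Ioc_union_Ioi_eq_Ioi ha,
    setIntegral_union Ioc_disjoint_Ioi_same measurableSet_Ioi
      (hf.mono_set Ioc_subset_Ioi_self) (hf.mono_set (Ioi_subset_Ioi ha)),
    ← Ioc_union_Ioi_eq_Ioi hab,
    setIntegral_union Ioc_disjoint_Ioi_same measurableSet_Ioi
      (hf.mono_set fun u hu => ha.trans_lt hu.1)
      (hf.mono_set fun u hu => (ha.trans hab).trans_lt hu)]
  have hI_left := setIntegral_nonpos (μ := volume) measurableSet_Ioc h_left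
  have hI_right := setIntegral_nonpos (μ := volume) measurableSet_Ioi h_right
  linarith

lemma self_mem_uIcc_sub_add (x d : ℝ) : x ∈ uIcc (x - d) (x + d) := by
  rcases le_total 0 d with hd | hd
  · exact mem_uIcc.2 (Or.inl ⟨by linarith, by linarith⟩)
  · exact mem_uIcc.2 (Or.inr ⟨by linarith, by linarith⟩)

section Reflection

variable {f : ℝ → ℝ} {x d : ℝ}

lemma IntervalIntegrable.comp_sub_left_of_sub_add
    (hf : IntervalIntegrable f volume (x - d) (x + d)) :
    IntervalIntegrable (fun t => f (x - t)) volume 0 d := by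
  simpa using
    ((hf.mono_set (uIcc_subset_uIcc_left (self_mem_uIcc_sub_add x d))).comp_sub_left x).symm

lemma IntervalIntegrable.comp_add_left_of_sub_add
    (hf : IntervalIntegrable f volume (x - d) (x + d)) :
    IntervalIntegrable (fun t => f (x + t)) volume 0 d := by
  simpa using (hf.mono_set (uIcc_subset_uIcc_right (self_mem_uIcc_sub_add x d))).comp_add_left x

lemma intervalIntegral_sub_add_eq (hf : IntervalIntegrable f volume (x - d) (x + d)) :
    ∫ u in (x - d)..(x + d), f u = ∫ t in (0 : ℝ)..d, (f (x - t) + f (x + t)) := by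
  rw [intervalIntegral.integral_add hf.comp_sub_left_of_sub_add hf.comp_add_left_of_sub_add,
    intervalIntegral.integral_comp_sub_left, intervalIntegral.integral_comp_add_left, sub_zero,
    add_zero, intervalIntegral.integral_add_adjacent_intervals
      (hf.mono_set (uIcc_subset_uIcc_left (self_mem_uIcc_sub_add x d)))
      (hf.mono_set (uIcc_subset_uIcc_right (self_mem_uIcc_sub_add x d)))]

end Reflection

noncomputable def amp (u : ℝ) : ℝ := √u - 1 / √u

noncomputable def phase (u : ℝ) : ℝ := -u ^ 3 / 6 + u / 2

lemma one_lt_sqrt_three : 1 < √3 := by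
  rw [lt_sqrt zero_le_one]; norm_num

lemma sqrt_three_lt_two : √3 < 2 := by
  rw [sqrt_lt' two_pos]; norm_num

lemma amp_eq_sub_div_sqrt {u : ℝ} (hu : 0 < u) : amp u = (u - 1) / √u := by
  rw [amp]
  field_simp
  rw [sq_sqrt hu.le]

lemma amp_nonpos {u : ℝ} (hu : 0 < u) (hu1 : u ≤ 1) : amp u ≤ 0 := by
  rw [amp_eq_sub_div_sqrt hu]
  exact div_nonpos_of_nonpos_of_nonneg (by linarith) (sqrt_nonneg u)

lemma amp_nonneg {u : ℝ} (hu : 1 ≤ u) : 0 ≤ amp u := by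
  rw [amp_eq_sub_div_sqrt (by linarith)]
  exact div_nonneg (by linarith) (sqrt_nonneg u)

lemma amp_one_add_lt_neg_amp_one_sub {δ : ℝ} (hδ : 0 < δ) (hδ1 : δ < 1) :
    amp (1 + δ) < -amp (1 - δ) := by
  rw [amp_eq_sub_div_sqrt (by linarith), amp_eq_sub_div_sqrt (by linarith), ← neg_div,
    add_sub_cancel_left, sub_sub_cancel_left, neg_neg]
  exact div_lt_div_of_pos_left hδ (sqrt_pos.2 (by linarith))
    (sqrt_lt_sqrt (by linarith) (by linarith))

lemma phase_nonneg {u : ℝ} (hu : 0 ≤ u) (hu3 : u ≤ √3) : 0 ≤ phase u := by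
  have : u ^ 2 ≤ 3 := by
    calc u ^ 2 ≤ √3 ^ 2 := by gcongr
      _ = 3 := sq_sqrt (by norm_num)
  unfold phase
  nlinarith

lemma phase_nonpos {u : ℝ} (hu3 : √3 ≤ u) : phase u ≤ 0 := by
  have hu : 0 ≤ u := (sqrt_nonneg 3).trans hu3
  have : 3 ≤ u ^ 2 := by
    calc (3 : ℝ) = √3 ^ 2 := (sq_sqrt (by norm_num)).symm
      _ ≤ u ^ 2 := by gcongr
  unfold phase
  nlinarith

lemma phase_one_add_lt_phase_one_sub {δ : ℝ} (hδ : 0 < δ) : phase (1 + δ) < phase (1 - δ) := by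
  have : phase (1 - δ) - phase (1 + δ) = δ ^ 3 / 3 := by unfold phase; ring
  linarith [pow_pos hδ 3]

lemma phase_le_one_sub {u : ℝ} (hu : 0 ≤ u) : phase u ≤ 1 - u ^ 3 / 12 := by
  unfold phase
  nlinarith [sq_nonneg (u - 1), mul_nonneg hu (sq_nonneg (u - 1))]

lemma exp_mul_phase_le {a b x u : ℝ} (ha : 0 < a) (hax : a ≤ x) (hxb : x ≤ b) (hu : 0 ≤ u) :
    exp (x * phase u) ≤ exp b * exp (-(a / 12) * u ^ 3) := by
  rw [← exp_add, exp_le_exp]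
  have hu3 : 0 ≤ u ^ 3 := by positivity
  nlinarith [mul_le_mul_of_nonneg_left (phase_le_one_sub hu) (ha.le.trans hax),
    mul_le_mul_of_nonneg_right hax hu3]

lemma abs_amp_le {u : ℝ} (hu : 0 < u) : |amp u| ≤ 2 * ((1 + u ^ 4) / √u) := by
  rw [amp_eq_sub_div_sqrt hu, abs_div, abs_of_pos (sqrt_pos.2 hu), ← mul_div_assoc]
  gcongr
  rw [abs_le]
  constructor <;> nlinarith [sq_nonneg (u ^ 2 - 1), sq_nonneg (u - 1)]

lemma abs_amp_mul_phase_le {u : ℝ} (hu : 0 < u) :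
    |amp u * phase u| ≤ 2 * ((1 + u ^ 4) / √u) := by
  rw [amp_eq_sub_div_sqrt hu, div_mul_eq_mul_div, abs_div, abs_of_pos (sqrt_pos.2 hu),
    ← mul_div_assoc]
  gcongr
  rw [abs_le]
  unfold phase
  constructor <;>
    nlinarith [sq_nonneg (u ^ 2 - 1), sq_nonneg (u - 1), sq_nonneg u, sq_nonneg (u ^ 2 - u)]

lemma continuousOn_amp : ContinuousOn amp (Ioi 0) :=
  continuous_sqrt.continuousOn.sub
    (continuousOn_const.div continuous_sqrt.continuousOn fun _ hu => (sqrt_pos.2 hu).ne')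

@[fun_prop]
lemma continuous_phase : Continuous phase := by
  unfold phase; fun_prop

lemma norm_mul_exp_mul_phase_le {g a b x u : ℝ} (hg : |g| ≤ 2 * ((1 + u ^ 4) / √u)) (ha : 0 < a)
    (hax : a ≤ x) (hxb : x ≤ b) (hu : 0 ≤ u) :
    ‖g * exp (x * phase u)‖ ≤ 2 * exp b * ((1 + u ^ 4) / √u * exp (-(a / 12) * u ^ 3)) := by
  rw [norm_mul, norm_eq_abs, norm_eq_abs, abs_exp]
  calc |g| * exp (x * phase u)
      ≤ 2 * ((1 + u ^ 4) / √u) * (exp b * exp (-(a / 12) * u ^ 3)) :=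
        mul_le_mul hg (exp_mul_phase_le ha hax hxb hu) (exp_pos _).le (by positivity)
    _ = _ := by ring

lemma integrableOn_mul_exp_mul_phase {g : ℝ → ℝ} (hg : ContinuousOn g (Ioi 0))
    (hg_le : ∀ u > 0, |g u| ≤ 2 * ((1 + u ^ 4) / √u)) {c : ℝ} (hc : 0 < c) :
    IntegrableOn (fun u => g u * exp (c * phase u)) (Ioi 0) := by
  have h_dom := (integrableOn_one_add_pow_div_sqrt_mul_exp 4 three_pos
    (by positivity : 0 < c / 12)).const_mul (2 * exp c)
  refine h_dom.mono' ((hg.mul (by fun_prop : Continuous fun u => exp (c * phase u)).continuousOn)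
    |>.aestronglyMeasurable measurableSet_Ioi) ?_
  rw [ae_restrict_iff' measurableSet_Ioi]
  exact ae_of_all _ fun u hu => norm_mul_exp_mul_phase_le (hg_le u hu) hc le_rfl le_rfl hu.le

lemma hasDerivAt_integral_amp_mul_exp_mul_phase {c : ℝ} (hc : 0 < c) :
    HasDerivAt (fun x => ∫ u in Ioi 0, amp u * exp (x * phase u))
      (∫ u in Ioi 0, amp u * phase u * exp (c * phase u)) c := by
  have hs : Ioo (c / 2) (2 * c) ∈ 𝓝 c := Ioo_mem_nhds (by linarith) (by linarith)
  have h_meas (x : ℝ) : AEStronglyMeasurable (fun u => amp u * exp (x * phase u))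
      (volume.restrict (Ioi 0)) :=
    (continuousOn_amp.mul (by fun_prop : Continuous fun u => exp (x * phase u)).continuousOn)
      |>.aestronglyMeasurable measurableSet_Ioi
  have h_dom := (integrableOn_one_add_pow_div_sqrt_mul_exp 4 three_pos
    (by positivity : 0 < c / 2 / 12)).const_mul (2 * exp (2 * c))
  refine (hasDerivAt_integral_of_dominated_loc_of_deriv_le hs (Eventually.of_forall h_meas)
    (integrableOn_mul_exp_mul_phase continuousOn_amp (fun u hu => abs_amp_le hu) hc)
    (F' := fun x u => amp u * phase u * exp (x * phase u))
    (integrableOn_mul_exp_mul_phase (g := fun u => amp u * phase u)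
      (continuousOn_amp.mul continuous_phase.continuousOn)
      (fun u hu => abs_amp_mul_phase_le hu) hc).aestronglyMeasurable ?_ h_dom ?_).2
  · rw [ae_restrict_iff' measurableSet_Ioi]
    exact ae_of_all _ fun u hu x hx => norm_mul_exp_mul_phase_le (abs_amp_mul_phase_le hu)
      (by positivity) hx.1.le hx.2.le hu.le
  · refine ae_of_all _ fun u x _ => ?_
    simpa only [id, one_mul, mul_comm (phase u), mul_assoc] using
      ((hasDerivAt_id x).mul_const (phase u)).exp.const_mul (amp u)

lemma amp_mul_phase_mul_exp_one_sub_add_one_add_neg {c δ : ℝ} (hc : 0 < c)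
    (hδ : δ ∈ Ioo 0 (√3 - 1)) :
    amp (1 - δ) * phase (1 - δ) * exp (c * phase (1 - δ)) +
      amp (1 + δ) * phase (1 + δ) * exp (c * phase (1 + δ)) < 0 := by
  obtain ⟨hδ0, hδ3⟩ := hδ
  have hδ1 : δ < 1 := by linarith [sqrt_three_lt_two]
  have h_amp := amp_one_add_lt_neg_amp_one_sub hδ0 hδ1
  have h_phase := phase_one_add_lt_phase_one_sub hδ0
  have h_phase_nonneg : 0 ≤ phase (1 + δ) := phase_nonneg (by linarith) (by linarith)
  have h_phase_pos : 0 < phase (1 - δ) := h_phase_nonneg.trans_lt h_phase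
  have h_amp_nonneg : 0 ≤ amp (1 + δ) := amp_nonneg (by linarith)
  have h_right_lt : amp (1 + δ) * phase (1 + δ) * exp (c * phase (1 + δ))
      < -amp (1 - δ) * phase (1 - δ) * exp (c * phase (1 - δ)) :=
    calc amp (1 + δ) * phase (1 + δ) * exp (c * phase (1 + δ))
        ≤ amp (1 + δ) * phase (1 - δ) * exp (c * phase (1 - δ)) := by gcongr
      _ < -amp (1 - δ) * phase (1 - δ) * exp (c * phase (1 - δ)) := by gcongr
  linarith

lemma integral_amp_mul_phase_mul_exp_neg {c : ℝ} (hc : 0 < c) :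
    ∫ u in Ioi 0, amp u * phase u * exp (c * phase u) < 0 := by
  set f : ℝ → ℝ := fun u => amp u * phase u * exp (c * phase u)
  set d := √3 - 1
  have hd : 0 < d := sub_pos.2 one_lt_sqrt_three
  have hd1 : d < 1 := by linarith [sqrt_three_lt_two]
  have hf : IntegrableOn f (Ioi 0) :=
    integrableOn_mul_exp_mul_phase (g := fun u => amp u * phase u)
      (continuousOn_amp.mul continuous_phase.continuousOn) (fun u hu => abs_amp_mul_phase_le hu) hc
  have hf_int : IntervalIntegrable f volume (1 - d) (1 + d) := by
    refine (hf.mono_set fun u hu => ?_).intervalIntegrable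
    rw [uIcc_of_le (by linarith)] at hu
    exact (by linarith : (0 : ℝ) < 1 - d).trans_le hu.1
  have h_left : ∀ u ∈ Ioc 0 (1 - d), f u ≤ 0 := fun u hu =>
    mul_nonpos_of_nonpos_of_nonneg
      (mul_nonpos_of_nonpos_of_nonneg (amp_nonpos hu.1 (by linarith [hu.2]))
        (phase_nonneg hu.1.le (by linarith [hu.2, one_lt_sqrt_three]))) (exp_pos _).le
  have h_right : ∀ u ∈ Ioi (1 + d), f u ≤ 0 := fun u hu =>
    mul_nonpos_of_nonpos_of_nonneg
      (mul_nonpos_of_nonneg_of_nonpos (amp_nonneg (by linarith [mem_Ioi.1 hu]))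
        (phase_nonpos (by linarith [mem_Ioi.1 hu]))) (exp_pos _).le
  have h_pair := intervalIntegral.intervalIntegral_pos_of_pos_on
    (hf_int.comp_sub_left_of_sub_add.add hf_int.comp_add_left_of_sub_add).neg
    (fun t ht => neg_pos.2 (amp_mul_phase_mul_exp_one_sub_add_one_add_neg hc ht)) hd
  simp only [Pi.neg_apply, intervalIntegral.integral_neg, neg_pos] at h_pair
  calc ∫ u in Ioi 0, f u ≤ ∫ u in (1 - d)..(1 + d), f u :=
        integral_Ioi_le_intervalIntegral (by linarith) (by linarith) hf h_left h_right
    _ = ∫ t in (0 : ℝ)..d, (f (1 - t) + f (1 + t)) := intervalIntegral_sub_add_eq hf_int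
    _ < 0 := h_pair

/-- `G(c) = ∫₀^∞ (√u − 1/√u) exp(−c(u³/6 − u/2)) du` is strictly decreasing on
`(0,∞)`; indeed its derivative
`G'(c) = ∫₀^∞ (√u − 1/√u)(−u³/6 + u/2) exp(c(−u³/6 + u/2)) du` is strictly
negative for every `c > 0`. -/
theorem G_strictAnti
    (G : ℝ → ℝ)
    (hG : ∀ c, G c = ∫ u in Set.Ioi (0:ℝ),
      (Real.sqrt u - 1 / Real.sqrt u) * Real.exp (-c * (u ^ 3 / 6 - u / 2))) :
    StrictAntiOn G (Set.Ioi (0:ℝ)) ∧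
    ∀ c > (0:ℝ),
      HasDerivAt G (∫ u in Set.Ioi (0:ℝ),
        (Real.sqrt u - 1 / Real.sqrt u) * (-u ^ 3 / 6 + u / 2) *
          Real.exp (c * (-u ^ 3 / 6 + u / 2))) c ∧
      (∫ u in Set.Ioi (0:ℝ),
        (Real.sqrt u - 1 / Real.sqrt u) * (-u ^ 3 / 6 + u / 2) *
          Real.exp (c * (-u ^ 3 / 6 + u / 2))) < 0 := by
  have hG_eq : G = fun c => ∫ u in Ioi 0, amp u * exp (c * phase u) := by
    funext c
    rw [hG]
    congr 1 with u
    rw [amp, phase]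
    ring_nf
  have h_deriv (c : ℝ) (hc : 0 < c) :
      HasDerivAt G (∫ u in Ioi 0, amp u * phase u * exp (c * phase u)) c :=
    hG_eq ▸ hasDerivAt_integral_amp_mul_exp_mul_phase hc
  refine ⟨strictAntiOn_of_hasDerivWithinAt_neg (convex_Ioi 0)
    (fun c hc => (h_deriv c hc).continuousAt.continuousWithinAt)
    (fun c hc => (h_deriv c (interior_subset hc)).hasDerivWithinAt)
    (fun c hc => integral_amp_mul_phase_mul_exp_neg (interior_subset hc)),
    fun c hc => ⟨h_deriv c hc, integral_amp_mul_phase_mul_exp_neg hc⟩⟩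
end

section
/- G(c) = ∫₀^∞ (√u − 1/√u) exp(−c(u³/6 − u/2)) du tends to −∞ as c → +∞. -/
open Real MeasureTheory Set Filter

noncomputable def phiG (u : ℝ) : ℝ := u ^ 3 / 6 - u / 2
noncomputable def psiG (u : ℝ) : ℝ := 1 / ((u + 1) * Real.sqrt u)
noncomputable def psidG (u : ℝ) : ℝ := -((3 * u + 1) / (2 * u * Real.sqrt u * (u + 1) ^ 2))
noncomputable def gG (u : ℝ) : ℝ := Real.sqrt u - 1 / Real.sqrt u
noncomputable def f2G (c u : ℝ) : ℝ := psidG u * (Real.exp (-c * phiG u) - 1)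

lemma exp_sub_one_le {x : ℝ} (hx : 0 ≤ x) : Real.exp x - 1 ≤ x * Real.exp x := by
  have h := Real.add_one_le_exp (-x)
  have h2 := mul_le_mul_of_nonneg_right h (Real.exp_pos x).le
  rw [← Real.exp_add] at h2
  simp only [neg_add_cancel, Real.exp_zero] at h2
  nlinarith

lemma phiG_lower (u : ℝ) (hu : 0 ≤ u) : u / 6 - 1 ≤ phiG u := by
  unfold phiG
  nlinarith [sq_nonneg (u - 7/6), mul_nonneg hu (sq_nonneg (u - 7/6)), sq_nonneg u]

lemma phiG_ge_third (u : ℝ) (hu : 0 ≤ u) : -(1/3 : ℝ) ≤ phiG u := by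
  unfold phiG
  nlinarith [sq_nonneg (u - 1), mul_nonneg (sq_nonneg (u - 1)) hu]

lemma phiG_nonpos {u : ℝ} (hu : 0 ≤ u) (hu3 : u ≤ Real.sqrt 3) : phiG u ≤ 0 := by
  have h3 : u * u ≤ 3 := by
    have := mul_self_le_mul_self hu hu3
    rwa [Real.mul_self_sqrt (by norm_num)] at this
  unfold phiG; nlinarith

lemma hasDerivAt_phiG (u : ℝ) : HasDerivAt phiG (u ^ 2 / 2 - 1 / 2) u := by
  have h : HasDerivAt (fun u : ℝ => u ^ 3 / 6 - u / 2) ((3 * u ^ 2) / 6 - 1 / 2) u :=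
    ((hasDerivAt_pow 3 u).div_const 6).sub ((hasDerivAt_id u).div_const 2)
  unfold phiG
  convert h using 1 <;> ring

lemma hasDerivAt_expE (c u : ℝ) :
    HasDerivAt (fun u => Real.exp (-c * phiG u))
      (-c * (u ^ 2 / 2 - 1 / 2) * Real.exp (-c * phiG u)) u := by
  have h := ((hasDerivAt_phiG u).const_mul (-c)).exp
  convert h using 1; ring

lemma hasDerivAt_psiG {u : ℝ} (hu : 0 < u) : HasDerivAt psiG (psidG u) u := by
  have hs : 0 < Real.sqrt u := Real.sqrt_pos.2 hu
  have hss : Real.sqrt u * Real.sqrt u = u := Real.mul_self_sqrt hu.le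
  have hd : HasDerivAt (fun u : ℝ => (u + 1) * Real.sqrt u)
      (1 * Real.sqrt u + (u + 1) * (1 / (2 * Real.sqrt u))) u :=
    ((hasDerivAt_id u).add_const 1).mul (Real.hasDerivAt_sqrt hu.ne')
  have hne : (u + 1) * Real.sqrt u ≠ 0 := by positivity
  have h := (hasDerivAt_const u (1:ℝ)).div hd hne
  refine h.congr_deriv ?_
  symm
  unfold psidG
  rw [neg_div', div_eq_div_iff (by positivity) (by positivity)]
  field_simp
  have h3 : Real.sqrt u ^ 3 = u * Real.sqrt u := by
    rw [pow_succ, Real.sq_sqrt hu.le]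
  ring_nf
  rw [Real.sq_sqrt hu.le]
  ring

example : True := trivial

lemma psiG_mul_g {u : ℝ} (hu : 0 < u) : psiG u * (u ^ 2 / 2 - 1 / 2) = gG u / 2 := by
  have hs : 0 < Real.sqrt u := Real.sqrt_pos.2 hu
  have hss : Real.sqrt u * Real.sqrt u = u := Real.mul_self_sqrt hu.le
  unfold psiG gG
  field_simp
  nlinarith [hss, hs]

lemma hasDerivAt_FG (c : ℝ) {u : ℝ} (hu : 0 < u) :
    HasDerivAt (fun u => psiG u * (Real.exp (-c * phiG u) - 1))
      (f2G c u - c / 2 * (gG u * Real.exp (-c * phiG u))) u := by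
  have h := (hasDerivAt_psiG hu).mul ((hasDerivAt_expE c u).sub_const 1)
  refine h.congr_deriv ?_
  symm
  unfold f2G
  linear_combination (c * Real.exp (-c * phiG u)) * psiG_mul_g hu

lemma continuous_phiG : Continuous phiG := by unfold phiG; fun_prop

lemma contOn_gE (c : ℝ) : ContinuousOn (fun u => gG u * Real.exp (-c * phiG u)) (Ioi (0:ℝ)) := by
  have hg : ContinuousOn gG (Ioi (0:ℝ)) := by
    apply ContinuousOn.sub Real.continuous_sqrt.continuousOn
    exact continuousOn_const.div Real.continuous_sqrt.continuousOn
      (fun x hx => Real.sqrt_ne_zero'.2 hx)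
  exact hg.mul (Real.continuous_exp.comp (continuous_const.mul continuous_phiG)).continuousOn

lemma contOn_f2 (c : ℝ) : ContinuousOn (f2G c) (Ioi (0:ℝ)) := by
  have hd : ContinuousOn psidG (Ioi (0:ℝ)) := by
    apply ContinuousOn.neg
    apply ContinuousOn.div (by fun_prop)
    · exact ContinuousOn.mul (by fun_prop) (by fun_prop)
    · intro x hx
      have hx' : (0:ℝ) < x := hx
      have : 0 < Real.sqrt x := Real.sqrt_pos.2 hx'
      positivity
  exact hd.mul ((Real.continuous_exp.comp (continuous_const.mul continuous_phiG)).continuousOn.sub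
    continuousOn_const)

lemma sqrt_bounds {u : ℝ} (hu : 0 < u) (hu1 : u ≤ 1) :
    Real.sqrt u ≤ 1 ∧ Real.sqrt u ≤ 1 / Real.sqrt u := by
  have hs : 0 < Real.sqrt u := Real.sqrt_pos.2 hu
  have hss : Real.sqrt u * Real.sqrt u = u := Real.mul_self_sqrt hu.le
  constructor
  · nlinarith
  · rw [le_div_iff₀ hs]; nlinarith

lemma intOn_gE {c : ℝ} (hc : 0 < c) :
    IntegrableOn (fun u => gG u * Real.exp (-c * phiG u)) (Ioi (0:ℝ)) := by
  have h01 : IntegrableOn (fun u => gG u * Real.exp (-c * phiG u)) (Ioc (0:ℝ) 1) := by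
    have hmaj : IntegrableOn (fun u : ℝ => Real.exp (c/2) * u ^ (-(1/2) : ℝ)) (Ioc (0:ℝ) 1) :=
      ((intervalIntegral.intervalIntegrable_rpow' (r := -(1/2)) (by norm_num)).1).const_mul _
    refine hmaj.integrable.mono
      (((contOn_gE c).mono Ioc_subset_Ioi_self).aestronglyMeasurable measurableSet_Ioc) ?_
    refine (ae_restrict_iff' measurableSet_Ioc).2 (ae_of_all _ fun u hu => ?_)
    have hu0 : 0 < u := hu.1
    have hs : 0 < Real.sqrt u := Real.sqrt_pos.2 hu0
    have hb := sqrt_bounds hu0 hu.2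
    have hE : Real.exp (-c * phiG u) ≤ Real.exp (c/2) := by
      apply Real.exp_le_exp.2
      unfold phiG
      have h1 : (0:ℝ) ≤ 1/2 - u/2 + u^3/6 := by nlinarith [pow_pos hu0 3, hu.2]
      nlinarith [mul_nonneg hc.le h1]
    have hrw : u ^ (-(1/2) : ℝ) = 1 / Real.sqrt u := by
      rw [Real.rpow_neg hu0.le, Real.sqrt_eq_rpow]
      exact (one_div _).symm
    rw [Real.norm_eq_abs, Real.norm_eq_abs, abs_mul, Real.abs_exp, hrw]
    have hgabs : |gG u| ≤ 1 / Real.sqrt u := by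
      unfold gG
      rw [abs_le]
      constructor
      · have : 0 ≤ Real.sqrt u := hs.le
        nlinarith [div_pos one_pos hs]
      · nlinarith [hb.2]
    have h1s : (0:ℝ) ≤ 1 / Real.sqrt u := by positivity
    rw [abs_of_nonneg (by positivity : (0:ℝ) ≤ Real.exp (c/2) * (1 / Real.sqrt u))]
    calc |gG u| * Real.exp (-c * phiG u) ≤ (1 / Real.sqrt u) * Real.exp (c/2) :=
          mul_le_mul hgabs hE (Real.exp_pos _).le h1s
      _ = Real.exp (c/2) * (1 / Real.sqrt u) := by ring
  have h1i : IntegrableOn (fun u => gG u * Real.exp (-c * phiG u)) (Ioi (1:ℝ)) := by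
    have hmaj : IntegrableOn (fun u : ℝ => (12 / c * Real.exp c) * Real.exp (-(c/12) * u))
        (Ioi (1:ℝ)) := (exp_neg_integrableOn_Ioi 1 (by positivity)).const_mul _
    refine hmaj.integrable.mono
      (((contOn_gE c).mono (fun x (hx : x ∈ Ioi (1:ℝ)) => show (0:ℝ) < x from lt_trans one_pos hx)).aestronglyMeasurable
        measurableSet_Ioi) ?_
    refine (ae_restrict_iff' measurableSet_Ioi).2 (ae_of_all _ fun u hu => ?_)
    have hu1 : (1:ℝ) < u := hu
    have hu0 : 0 < u := lt_trans one_pos hu1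
    have hs : 0 < Real.sqrt u := Real.sqrt_pos.2 hu0
    have hs1 : 1 ≤ Real.sqrt u := by
      rw [show (1:ℝ) = Real.sqrt 1 from (Real.sqrt_one).symm]
      exact Real.sqrt_le_sqrt hu1.le
    have hss : Real.sqrt u * Real.sqrt u = u := Real.mul_self_sqrt hu0.le
    have hsu : Real.sqrt u ≤ u := by nlinarith
    have hgabs : |gG u| ≤ u := by
      unfold gG
      rw [abs_le]
      have h1su : 1 / Real.sqrt u ≤ 1 := by rw [div_le_one hs]; exact hs1
      have : 0 < 1 / Real.sqrt u := by positivity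
      constructor <;> nlinarith
    have hE : Real.exp (-c * phiG u) ≤ Real.exp (c - c * u / 6) := by
      apply Real.exp_le_exp.2
      have := phiG_lower u hu0.le
      nlinarith
    have hux : u ≤ 12 / c * Real.exp (c * u / 12) := by
      have h1 : c * u / 12 ≤ Real.exp (c * u / 12) := by
        nlinarith [Real.add_one_le_exp (c * u / 12), Real.exp_pos (c * u / 12)]
      rw [div_mul_eq_mul_div, le_div_iff₀ hc]
      nlinarith
    rw [Real.norm_eq_abs, Real.norm_eq_abs, abs_mul, Real.abs_exp]
    rw [abs_of_nonneg (by positivity : (0:ℝ) ≤ (12 / c * Real.exp c) * Real.exp (-(c/12) * u))]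
    calc |gG u| * Real.exp (-c * phiG u)
        ≤ u * Real.exp (c - c * u / 6) :=
          mul_le_mul hgabs hE (Real.exp_pos _).le hu0.le
      _ ≤ (12 / c * Real.exp (c * u / 12)) * Real.exp (c - c * u / 6) :=
          mul_le_mul_of_nonneg_right hux (Real.exp_pos _).le
      _ = (12 / c * Real.exp c) * Real.exp (-(c/12) * u) := by
          rw [mul_assoc, mul_assoc, ← Real.exp_add, ← Real.exp_add]
          ring_nf
  rw [show Ioi (0:ℝ) = Ioc 0 1 ∪ Ioi 1 from (Ioc_union_Ioi_eq_Ioi (by norm_num)).symm]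
  exact h01.union h1i

lemma psid_neg_pos {u : ℝ} (hu : 0 < u) :
    0 < (3 * u + 1) / (2 * u * Real.sqrt u * (u + 1) ^ 2) := by
  have hs : 0 < Real.sqrt u := Real.sqrt_pos.2 hu
  positivity

lemma one_le_sqrt3 : (1:ℝ) ≤ Real.sqrt 3 := by
  rw [show (1:ℝ) = Real.sqrt 1 from (Real.sqrt_one).symm]
  exact Real.sqrt_le_sqrt (by norm_num)

lemma exp_sub_one_bound {c u : ℝ} (hc : 0 < c) (hu : 0 < u) (hu1 : u ≤ 1) :
    0 ≤ Real.exp (-c * phiG u) - 1 ∧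
    Real.exp (-c * phiG u) - 1 ≤ c * u / 2 * Real.exp (c / 2) := by
  have hphi : phiG u ≤ 0 := phiG_nonpos hu.le (le_trans hu1 one_le_sqrt3)
  have hx : 0 ≤ -c * phiG u := by nlinarith
  constructor
  · nlinarith [Real.one_le_exp hx]
  · have h1 := exp_sub_one_le hx
    have hxu : -c * phiG u ≤ c * u / 2 := by
      unfold phiG at *
      nlinarith [mul_nonneg hc.le (pow_pos hu 3).le]
    have hE : Real.exp (-c * phiG u) ≤ Real.exp (c / 2) := by
      apply Real.exp_le_exp.2
      nlinarith
    calc Real.exp (-c * phiG u) - 1 ≤ (-c * phiG u) * Real.exp (-c * phiG u) := h1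
      _ ≤ (c * u / 2) * Real.exp (c / 2) :=
          mul_le_mul hxu hE (Real.exp_pos _).le (by positivity)

lemma intOn_f2 {c : ℝ} (hc : 0 < c) : IntegrableOn (f2G c) (Ioi (0:ℝ)) := by
  have h01 : IntegrableOn (f2G c) (Ioc (0:ℝ) 1) := by
    have hmaj : IntegrableOn (fun u : ℝ => (c * Real.exp (c/2)) * u ^ (-(1/2) : ℝ))
        (Ioc (0:ℝ) 1) :=
      ((intervalIntegral.intervalIntegrable_rpow' (r := -(1/2)) (by norm_num)).1).const_mul _
    refine hmaj.integrable.mono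
      (((contOn_f2 c).mono Ioc_subset_Ioi_self).aestronglyMeasurable measurableSet_Ioc) ?_
    refine (ae_restrict_iff' measurableSet_Ioc).2 (ae_of_all _ fun u hu => ?_)
    have hu0 : 0 < u := hu.1
    have hs : 0 < Real.sqrt u := Real.sqrt_pos.2 hu0
    have hss : Real.sqrt u * Real.sqrt u = u := Real.mul_self_sqrt hu0.le
    obtain ⟨hE0, hE1⟩ := exp_sub_one_bound hc hu0 hu.2
    have hrw : u ^ (-(1/2) : ℝ) = 1 / Real.sqrt u := by
      rw [Real.rpow_neg hu0.le, Real.sqrt_eq_rpow]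
      exact (one_div _).symm
    have hpsid : |psidG u| ≤ 2 / (u * Real.sqrt u) := by
      unfold psidG
      rw [abs_neg, abs_of_pos (psid_neg_pos hu0), div_le_div_iff₀ (by positivity) (by positivity)]
      have key : 3 * u + 1 ≤ 4 * (u + 1) ^ 2 := by nlinarith
      calc (3 * u + 1) * (u * Real.sqrt u) ≤ (4 * (u + 1) ^ 2) * (u * Real.sqrt u) :=
            mul_le_mul_of_nonneg_right key (by positivity)
        _ = 2 * (2 * u * Real.sqrt u * (u + 1) ^ 2) := by ring
    rw [Real.norm_eq_abs, Real.norm_eq_abs, hrw]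
    rw [abs_of_nonneg (by positivity : (0:ℝ) ≤ (c * Real.exp (c/2)) * (1 / Real.sqrt u))]
    unfold f2G
    rw [abs_mul, abs_of_nonneg hE0]
    calc |psidG u| * (Real.exp (-c * phiG u) - 1)
        ≤ (2 / (u * Real.sqrt u)) * (c * u / 2 * Real.exp (c / 2)) :=
          mul_le_mul hpsid hE1 hE0 (by positivity)
      _ = (c * Real.exp (c/2)) * (1 / Real.sqrt u) := by
          field_simp
  have h1i : IntegrableOn (f2G c) (Ioi (1:ℝ)) := by
    have hmaj : IntegrableOn (fun u : ℝ => (2 * (Real.exp (c/3) + 1)) * u ^ (-2 : ℝ))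
        (Ioi (1:ℝ)) := (integrableOn_Ioi_rpow_of_lt (by norm_num) one_pos).const_mul _
    refine hmaj.integrable.mono
      (((contOn_f2 c).mono (fun x (hx : x ∈ Ioi (1:ℝ)) => show (0:ℝ) < x from lt_trans one_pos hx)).aestronglyMeasurable
        measurableSet_Ioi) ?_
    refine (ae_restrict_iff' measurableSet_Ioi).2 (ae_of_all _ fun u hu => ?_)
    have hu1 : (1:ℝ) < u := hu
    have hu0 : 0 < u := lt_trans one_pos hu1
    have hs : 0 < Real.sqrt u := Real.sqrt_pos.2 hu0
    have hs1 : 1 ≤ Real.sqrt u := Real.one_le_sqrt.2 hu1.le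
    have hss : Real.sqrt u * Real.sqrt u = u := Real.mul_self_sqrt hu0.le
    have hrw : u ^ (-2 : ℝ) = 1 / u ^ 2 := by
      rw [show (-2:ℝ) = -((2:ℕ):ℝ) by norm_num, Real.rpow_neg hu0.le, Real.rpow_natCast]
      exact (one_div _).symm
    have hpsid : |psidG u| ≤ 2 / u ^ 2 := by
      unfold psidG
      rw [abs_neg, abs_of_pos (psid_neg_pos hu0), div_le_div_iff₀ (by positivity) (by positivity)]
      calc (3 * u + 1) * u ^ 2 ≤ (4 * u * (u + 1) ^ 2) * 1 := by nlinarith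
        _ ≤ (4 * u * (u + 1) ^ 2) * Real.sqrt u :=
            mul_le_mul_of_nonneg_left hs1 (by positivity)
        _ = 2 * (2 * u * Real.sqrt u * (u + 1) ^ 2) := by ring
    have hEabs : |Real.exp (-c * phiG u) - 1| ≤ Real.exp (c/3) + 1 := by
      rw [abs_le]
      have hE : Real.exp (-c * phiG u) ≤ Real.exp (c/3) := by
        apply Real.exp_le_exp.2
        have := phiG_ge_third u hu0.le
        nlinarith
      have := Real.exp_pos (-c * phiG u)
      constructor <;> nlinarith [Real.exp_pos (c/3)]
    rw [Real.norm_eq_abs, Real.norm_eq_abs, hrw]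
    rw [abs_of_nonneg (by positivity : (0:ℝ) ≤ (2 * (Real.exp (c/3) + 1)) * (1 / u ^ 2))]
    unfold f2G
    rw [abs_mul]
    calc |psidG u| * |Real.exp (-c * phiG u) - 1|
        ≤ (2 / u ^ 2) * (Real.exp (c/3) + 1) :=
          mul_le_mul hpsid hEabs (abs_nonneg _) (by positivity)
      _ = (2 * (Real.exp (c/3) + 1)) * (1 / u ^ 2) := by ring
  rw [show Ioi (0:ℝ) = Ioc 0 1 ∪ Ioi 1 from (Ioc_union_Ioi_eq_Ioi (by norm_num)).symm]
  exact h01.union h1i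

lemma key_identity {c : ℝ} (hc : 0 < c) :
    ∫ u in Ioi (0:ℝ), gG u * Real.exp (-c * phiG u)
      = (2 / c) * ∫ u in Ioi (0:ℝ), f2G c u := by
  set F : ℝ → ℝ := fun u => psiG u * (Real.exp (-c * phiG u) - 1) with hF
  have hF0 : F 0 = 0 := by simp [hF, phiG]
  have hcont : ContinuousWithinAt F (Ici (0:ℝ)) 0 := by
    have htend : Tendsto F (nhdsWithin 0 (Ici (0:ℝ))) (nhds 0) := by
      apply squeeze_zero_norm' (a := fun u => c * Real.exp (c/2) * Real.sqrt u)
      · filter_upwards [Icc_mem_nhdsGE one_pos] with u hu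
        rcases eq_or_lt_of_le hu.1 with h0 | h0
        · simp [hF, ← h0, phiG]
        · obtain ⟨hE0, hE1⟩ := exp_sub_one_bound hc h0 hu.2
          have hs : 0 < Real.sqrt u := Real.sqrt_pos.2 h0
          have hpsi : psiG u ≤ 1 / Real.sqrt u := by
            unfold psiG
            apply div_le_div_of_nonneg_left one_pos.le hs
            nlinarith
          have hpsi0 : 0 < psiG u := by unfold psiG; positivity
          rw [Real.norm_eq_abs, hF, abs_mul, abs_of_pos hpsi0, abs_of_nonneg hE0]
          calc psiG u * (Real.exp (-c * phiG u) - 1)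
              ≤ (1 / Real.sqrt u) * (c * u / 2 * Real.exp (c/2)) :=
                mul_le_mul hpsi hE1 hE0 (by positivity)
            _ = c * Real.exp (c/2) * (u / Real.sqrt u) / 2 := by ring
            _ = c * Real.exp (c/2) * Real.sqrt u / 2 := by rw [Real.div_sqrt]
            _ ≤ c * Real.exp (c/2) * Real.sqrt u := by
                have : 0 ≤ c * Real.exp (c/2) * Real.sqrt u := by positivity
                linarith
      · have h : Tendsto (fun u : ℝ => c * Real.exp (c/2) * Real.sqrt u) (nhds 0)
            (nhds (c * Real.exp (c/2) * Real.sqrt 0)) :=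
          ((continuous_const.mul Real.continuous_sqrt)).tendsto 0
        simp only [Real.sqrt_zero, mul_zero] at h
        exact h.mono_left nhdsWithin_le_nhds
    unfold ContinuousWithinAt
    rw [hF0]
    exact htend
  have hderiv : ∀ x ∈ Ioi (0:ℝ),
      HasDerivAt F (f2G c x - c / 2 * (gG x * Real.exp (-c * phiG x))) x :=
    fun x hx => hasDerivAt_FG c hx
  have hint : IntegrableOn
      (fun x => f2G c x - c / 2 * (gG x * Real.exp (-c * phiG x))) (Ioi (0:ℝ)) :=
    (intOn_f2 hc).sub ((intOn_gE hc).const_mul (c/2))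
  have htop : Tendsto F atTop (nhds 0) := by
    apply squeeze_zero_norm' (a := fun u => (Real.exp (c/3) + 1) * u⁻¹)
    · filter_upwards [eventually_ge_atTop (1:ℝ)] with u hu1
      have hu0 : (0:ℝ) < u := lt_of_lt_of_le one_pos hu1
      have hs : 0 < Real.sqrt u := Real.sqrt_pos.2 hu0
      have hs1 : 1 ≤ Real.sqrt u := Real.one_le_sqrt.2 hu1
      have hpsi0 : 0 < psiG u := by unfold psiG; positivity
      have hpsi : psiG u ≤ 1 / u := by
        unfold psiG
        apply div_le_div_of_nonneg_left one_pos.le hu0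
        nlinarith
      have hEabs : |Real.exp (-c * phiG u) - 1| ≤ Real.exp (c/3) + 1 := by
        rw [abs_le]
        have hE : Real.exp (-c * phiG u) ≤ Real.exp (c/3) := by
          apply Real.exp_le_exp.2
          have := phiG_ge_third u hu0.le
          nlinarith
        have := Real.exp_pos (-c * phiG u)
        constructor <;> nlinarith [Real.exp_pos (c/3)]
      rw [Real.norm_eq_abs, hF, abs_mul, abs_of_pos hpsi0]
      calc psiG u * |Real.exp (-c * phiG u) - 1|
          ≤ (1 / u) * (Real.exp (c/3) + 1) :=
            mul_le_mul hpsi hEabs (abs_nonneg _) (by positivity)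
        _ = (Real.exp (c/3) + 1) * u⁻¹ := by rw [one_div]; ring
    · have := tendsto_inv_atTop_zero (𝕜 := ℝ)
      have h2 := this.const_mul (Real.exp (c/3) + 1)
      simpa using h2
  have h0 := integral_Ioi_of_hasDerivAt_of_tendsto hcont hderiv hint htop
  rw [hF0, sub_zero] at h0
  rw [integral_sub (intOn_f2 hc) ((intOn_gE hc).const_mul (c/2))] at h0
  rw [MeasureTheory.integral_const_mul] at h0
  have hI := sub_eq_zero.1 h0
  rw [hI, ← mul_assoc, show (2:ℝ)/c * (c/2) = 1 by field_simp, one_mul]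

noncomputable def C0 : ℝ := ∫ u in Ioi (Real.sqrt 3), 2 * u ^ (-2 : ℝ)

lemma f2_integral_bound {c : ℝ} (hc : 0 < c) :
    ∫ u in Ioi (0:ℝ), f2G c u ≤ C0 - 1/8 * (Real.exp (11 * c / 48) - 1) := by
  have s3pos : (0:ℝ) < Real.sqrt 3 := lt_of_lt_of_le one_pos one_le_sqrt3
  have int1 : IntegrableOn (f2G c) (Ioc (0:ℝ) (Real.sqrt 3)) :=
    (intOn_f2 hc).mono_set (fun x hx => hx.1)
  have int2 : IntegrableOn (f2G c) (Ioi (Real.sqrt 3)) :=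
    (intOn_f2 hc).mono_set (fun x hx => lt_trans s3pos hx)
  have hsplit : ∫ u in Ioi (0:ℝ), f2G c u
      = (∫ u in Ioc (0:ℝ) (Real.sqrt 3), f2G c u) + ∫ u in Ioi (Real.sqrt 3), f2G c u := by
    rw [← setIntegral_union (Ioc_disjoint_Ioi le_rfl) measurableSet_Ioi int1 int2,
      Ioc_union_Ioi_eq_Ioi s3pos.le]
  -- Negativity of f2 on (0, √3]
  have hneg : ∀ u ∈ Ioc (0:ℝ) (Real.sqrt 3), f2G c u ≤ 0 := by
    intro u hu
    have hpsid : psidG u ≤ 0 := by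
      unfold psidG
      exact neg_nonpos.2 (psid_neg_pos hu.1).le
    have hE : 0 ≤ Real.exp (-c * phiG u) - 1 := by
      have := phiG_nonpos hu.1.le hu.2
      have hx : 0 ≤ -c * phiG u := by nlinarith
      nlinarith [Real.one_le_exp hx]
    exact mul_nonpos_of_nonpos_of_nonneg hpsid hE
  -- Step 1: restrict negative part to [1/2, 1]
  have hsub : Ioc (1/2 : ℝ) 1 ⊆ Ioc (0:ℝ) (Real.sqrt 3) :=
    Ioc_subset_Ioc (by norm_num) one_le_sqrt3
  have hstep1 : (∫ u in Ioc (0:ℝ) (Real.sqrt 3), f2G c u)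
      ≤ ∫ u in Ioc (1/2 : ℝ) 1, f2G c u := by
    have h := setIntegral_mono_set (s := Ioc (1/2 : ℝ) 1) (t := Ioc (0:ℝ) (Real.sqrt 3))
      int1.neg
      ((ae_restrict_iff' measurableSet_Ioc).2 (ae_of_all _ fun u hu => by
        simpa using hneg u hu))
      (HasSubset.Subset.eventuallyLE hsub)
    simp only [Pi.neg_apply, integral_neg] at h
    linarith
  -- Step 2: bound on [1/2, 1]
  have hstep2 : (∫ u in Ioc (1/2 : ℝ) 1, f2G c u)
      ≤ -1/8 * (Real.exp (11 * c / 48) - 1) := by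
    have hptwise : ∀ u ∈ Ioc (1/2 : ℝ) 1, f2G c u ≤ -(1/4) * (Real.exp (11 * c / 48) - 1) := by
      intro u hu
      have hu0 : (0:ℝ) < u := lt_trans (by norm_num) hu.1
      have hs : 0 < Real.sqrt u := Real.sqrt_pos.2 hu0
      have hs1 : Real.sqrt u ≤ 1 := Real.sqrt_le_one.2 hu.2
      have h1 : psidG u ≤ -(1/4) := by
        unfold psidG
        rw [neg_le_neg_iff, le_div_iff₀ (by positivity)]
        have hd : 2 * u * Real.sqrt u * (u + 1) ^ 2 ≤ 8 := by
          nlinarith [mul_le_mul_of_nonneg_left hs1 (by positivity : (0:ℝ) ≤ 2*u*(u+1)^2),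
            mul_nonneg (by linarith [hu.2] : (0:ℝ) ≤ 1 - u)
              (by nlinarith [hu.1] : (0:ℝ) ≤ 2*u^2 + 6*u + 8)]
        nlinarith [hu.1]
      have hphi : phiG u ≤ -(11/48) := by
        unfold phiG
        nlinarith [hu.1, hu.2, sq_nonneg (u - 1/2)]
      have h2 : Real.exp (11 * c / 48) - 1 ≤ Real.exp (-c * phiG u) - 1 := by
        have : Real.exp (11 * c / 48) ≤ Real.exp (-c * phiG u) := by
          apply Real.exp_le_exp.2
          nlinarith
        linarith
      have h3 : (0:ℝ) ≤ Real.exp (11 * c / 48) - 1 := by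
        nlinarith [Real.one_le_exp (by positivity : (0:ℝ) ≤ 11 * c / 48)]
      calc f2G c u = psidG u * (Real.exp (-c * phiG u) - 1) := rfl
        _ ≤ -(1/4) * (Real.exp (-c * phiG u) - 1) :=
            mul_le_mul_of_nonneg_right h1 (by linarith)
        _ ≤ -(1/4) * (Real.exp (11 * c / 48) - 1) := by nlinarith
    have hconst : IntegrableOn (fun _ : ℝ => -(1/4) * (Real.exp (11 * c / 48) - 1))
        (Ioc (1/2 : ℝ) 1) := integrableOn_const measure_Ioc_lt_top.ne
    have h := setIntegral_mono_on (int1.mono_set hsub) hconst measurableSet_Ioc hptwise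
    rw [setIntegral_const] at h
    rw [Real.volume_real_Ioc] at h
    rw [max_eq_left (by norm_num : (0:ℝ) ≤ 1 - 1/2)] at h
    calc (∫ u in Ioc (1/2 : ℝ) 1, f2G c u)
        ≤ (1 - 1/2) • (-(1/4) * (Real.exp (11 * c / 48) - 1)) := h
      _ = -1/8 * (Real.exp (11 * c / 48) - 1) := by
          rw [smul_eq_mul]; ring
  -- Step 3: bound the tail
  have hstep3 : (∫ u in Ioi (Real.sqrt 3), f2G c u) ≤ C0 := by
    have hmaj : IntegrableOn (fun u : ℝ => 2 * u ^ (-2 : ℝ)) (Ioi (Real.sqrt 3)) :=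
      (integrableOn_Ioi_rpow_of_lt (by norm_num) s3pos).const_mul 2
    refine setIntegral_mono_on int2 hmaj measurableSet_Ioi fun u hu => ?_
    have hu3 : Real.sqrt 3 < u := hu
    have hu1 : (1:ℝ) < u := lt_of_le_of_lt one_le_sqrt3 hu3
    have hu0 : (0:ℝ) < u := lt_trans one_pos hu1
    have hs : 0 < Real.sqrt u := Real.sqrt_pos.2 hu0
    have hs1 : 1 ≤ Real.sqrt u := Real.one_le_sqrt.2 hu1.le
    have hphi : 0 ≤ phiG u := by
      have h33 : (3:ℝ) ≤ u * u := by
        have := mul_self_le_mul_self (Real.sqrt_nonneg 3) hu3.le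
        rwa [Real.mul_self_sqrt (by norm_num)] at this
      unfold phiG; nlinarith
    have hE : Real.exp (-c * phiG u) ≤ 1 := by
      rw [show (1:ℝ) = Real.exp 0 from (Real.exp_zero).symm]
      apply Real.exp_le_exp.2
      nlinarith
    have hE0 := Real.exp_pos (-c * phiG u)
    have hpsid : |psidG u| ≤ 2 / u ^ 2 := by
      unfold psidG
      rw [abs_neg, abs_of_pos (psid_neg_pos hu0), div_le_div_iff₀ (by positivity) (by positivity)]
      calc (3 * u + 1) * u ^ 2 ≤ (4 * u * (u + 1) ^ 2) * 1 := by nlinarith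
        _ ≤ (4 * u * (u + 1) ^ 2) * Real.sqrt u :=
            mul_le_mul_of_nonneg_left hs1 (by positivity)
        _ = 2 * (2 * u * Real.sqrt u * (u + 1) ^ 2) := by ring
    have hrw : u ^ (-2 : ℝ) = 1 / u ^ 2 := by
      rw [show (-2:ℝ) = -((2:ℕ):ℝ) by norm_num, Real.rpow_neg hu0.le, Real.rpow_natCast]
      exact (one_div _).symm
    calc f2G c u ≤ |f2G c u| := le_abs_self _
      _ = |psidG u| * |Real.exp (-c * phiG u) - 1| := abs_mul _ _
      _ ≤ (2 / u ^ 2) * 1 := by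
          apply mul_le_mul hpsid _ (abs_nonneg _) (by positivity)
          rw [abs_le]; constructor <;> nlinarith
      _ = 2 * u ^ (-2:ℝ) := by rw [hrw]; ring
  calc ∫ u in Ioi (0:ℝ), f2G c u
      = (∫ u in Ioc (0:ℝ) (Real.sqrt 3), f2G c u) + ∫ u in Ioi (Real.sqrt 3), f2G c u := hsplit
    _ ≤ (-1/8 * (Real.exp (11 * c / 48) - 1)) + C0 := add_le_add (le_trans hstep1 hstep2) hstep3
    _ = C0 - 1/8 * (Real.exp (11 * c / 48) - 1) := by ring

/-- `G(c) → −∞` as `c → +∞`. -/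
theorem G_tendsto_atBot
    (G : ℝ → ℝ)
    (hG : ∀ c, G c = ∫ u in Set.Ioi (0:ℝ),
      (Real.sqrt u - 1 / Real.sqrt u) * Real.exp (-c * (u ^ 3 / 6 - u / 2))) :
    Tendsto G atTop atBot := by
  have hbound : ∀ c : ℝ, 0 < c →
      G c ≤ 2 / c * (C0 + 1/8 - 1/8 * Real.exp (11 * c / 48)) := by
    intro c hc
    rw [hG c]
    have hrfl : (∫ u in Set.Ioi (0:ℝ),
        (Real.sqrt u - 1 / Real.sqrt u) * Real.exp (-c * (u ^ 3 / 6 - u / 2)))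
        = ∫ u in Ioi (0:ℝ), gG u * Real.exp (-c * phiG u) := rfl
    rw [hrfl, key_identity hc]
    have h2 := f2_integral_bound hc
    calc 2 / c * ∫ u in Ioi (0:ℝ), f2G c u
        ≤ 2 / c * (C0 - 1/8 * (Real.exp (11 * c / 48) - 1)) :=
          mul_le_mul_of_nonneg_left h2 (by positivity)
      _ = 2 / c * (C0 + 1/8 - 1/8 * Real.exp (11 * c / 48)) := by ring
  have hT2 : Tendsto (fun c : ℝ => Real.exp (11 * c / 48) / c) atTop atTop := by
    have hlin : Tendsto (fun c : ℝ => 11 * c / 48) atTop atTop := by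
      apply Tendsto.atTop_div_const (by norm_num : (0:ℝ) < 48)
      exact tendsto_id.const_mul_atTop (by norm_num : (0:ℝ) < 11)
    have h := (Real.tendsto_exp_div_pow_atTop 1).comp hlin
    have h2 := h.const_mul_atTop (show (0:ℝ) < 11/48 by norm_num)
    apply h2.congr'
    filter_upwards [eventually_gt_atTop (0:ℝ)] with c hc
    simp only [Function.comp_apply, pow_one]
    field_simp
  have hTbound : Tendsto (fun c : ℝ => 2 / c * (C0 + 1/8 - 1/8 * Real.exp (11 * c / 48)))
      atTop atBot := by
    have hT1 : Tendsto (fun c : ℝ => 2 * (C0 + 1/8) * c⁻¹) atTop (nhds 0) := by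
      have := tendsto_inv_atTop_zero.const_mul (2 * (C0 + 1/8))
      simpa using this
    have hT2' : Tendsto (fun c : ℝ => -((1/4) * (Real.exp (11 * c / 48) / c))) atTop atBot :=
      tendsto_neg_atTop_atBot.comp (hT2.const_mul_atTop (by norm_num : (0:ℝ) < 1/4))
    have hsum := hT1.add_atBot hT2'
    apply hsum.congr'
    filter_upwards [eventually_gt_atTop (0:ℝ)] with c hc
    field_simp
    ring
  apply tendsto_atBot_mono' atTop _ hTbound
  filter_upwards [eventually_gt_atTop (0:ℝ)] with c hc
  exact hbound c hc
end
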